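/- Let K be algebraically closed and I = (f_1, …, f_r) ⊴ K[x]. Suppose for each 1 ≤ i ≤ r that h_i ∈ K[x] and l_i ∈ ℕ satisfy det(v)^{l_i} · f_i(v⁻¹) = h_i(v) for all v ∈ GL(n, K), and set k_i = det(x)·h_i ∈ K[x]. Then V*(I) is closed under inversion (v ∈ V*(I) implies v⁻¹ ∈ V*(I)) if and only if k_i ∈ √I (the radical of I) for every 1 ≤ i ≤ r. -/

import Mathlib

/-!
On `GL(n, K)` we have `kᵢ(v) = det(v)^(lᵢ + 1) · fᵢ(v⁻¹)`, and off it `kᵢ(v) = 0` because of the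
factor `det`. So `kᵢ` vanishes on all of `V(I)` exactly when `fᵢ(v⁻¹) = 0` for every `v ∈ V*(I)`,
and by the Nullstellensatz vanishing on `V(I)` means lying in `√I`.
-/

open MvPolynomial

/-- Evaluation of a polynomial in the `n²` indeterminates at an `n × n` matrix. -/
noncomputable def matEval {n : ℕ} {K : Type*} [Field K] (v : Matrix (Fin n) (Fin n) K) :
    MvPolynomial (Fin n × Fin n) K →+* K :=
  MvPolynomial.eval (fun p => v p.1 p.2)

/-- `V(I)`: the matrices annihilating every polynomial of `I`. -/
def Vset {n : ℕ} {K : Type*} [Field K] (I : Ideal (MvPolynomial (Fin n × Fin n) K)) :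
    Set (Matrix (Fin n) (Fin n) K) :=
  {v | ∀ f ∈ I, matEval v f = 0}

/-- `V*(I) = V(I) ∩ GL(n,K)`: the invertible matrices in `V(I)`. -/
def Vstar {n : ℕ} {K : Type*} [Field K] (I : Ideal (MvPolynomial (Fin n × Fin n) K)) :
    Set (Matrix (Fin n) (Fin n) K) :=
  {v | v ∈ Vset I ∧ IsUnit v}

/-- `det(x)`, the determinant of the matrix of indeterminates. -/
noncomputable def detPoly (n : ℕ) (K : Type*) [Field K] : MvPolynomial (Fin n × Fin n) K :=
  (Matrix.of fun i j => MvPolynomial.X (i, j)).det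

theorem matEval_detPoly {n : ℕ} {K : Type*} [Field K] (v : Matrix (Fin n) (Fin n) K) :
    matEval v (detPoly n K) = v.det := by
  rw [detPoly, RingHom.map_det]
  congr 1
  ext i j
  simp [matEval]

theorem mem_Vset_span_range_iff {n r : ℕ} {K : Type*} [Field K]
    (f : Fin r → MvPolynomial (Fin n × Fin n) K) (v : Matrix (Fin n) (Fin n) K) :
    v ∈ Vset (Ideal.span (Set.range f)) ↔ ∀ i, matEval v (f i) = 0 := by
  refine ⟨fun hv i => hv _ (Ideal.subset_span ⟨i, rfl⟩), fun hf g hg => ?_⟩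
  have hker : Ideal.span (Set.range f) ≤ RingHom.ker (matEval v) :=
    Ideal.span_le.mpr (Set.range_subset_iff.mpr hf)
  exact hker hg

theorem mem_radical_iff_forall_mem_Vset {n : ℕ} {K : Type*} [Field K] [IsAlgClosed K]
    {I : Ideal (MvPolynomial (Fin n × Fin n) K)} {g : MvPolynomial (Fin n × Fin n) K} :
    g ∈ I.radical ↔ ∀ v ∈ Vset I, matEval v g = 0 := by
  rw [← vanishingIdeal_zeroLocus_eq_radical (K := K), mem_vanishingIdeal_iff]
  exact ⟨fun H v hv => H (fun p => v p.1 p.2) hv,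
    fun H x hx => H (Matrix.of fun i j => x (i, j)) hx⟩

theorem matEval_detPoly_mul_eq_zero_iff {n : ℕ} {K : Type*} [Field K]
    {f h : MvPolynomial (Fin n × Fin n) K} {l : ℕ}
    (hfh : ∀ v : Matrix (Fin n) (Fin n) K, IsUnit v → v.det ^ l * matEval v⁻¹ f = matEval v h)
    (v : Matrix (Fin n) (Fin n) K) :
    matEval v (detPoly n K * h) = 0 ↔ (IsUnit v → matEval v⁻¹ f = 0) := by
  rw [map_mul, matEval_detPoly]
  by_cases hv : IsUnit v
  · have hdet : v.det ≠ 0 := (v.isUnit_iff_isUnit_det.mp hv).ne_zero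
    simp [hv, hdet, ← hfh v hv]
  · have hdet : v.det = 0 := by simpa [Matrix.isUnit_iff_isUnit_det] using hv
    simp [hv, hdet]

theorem stmt8_general {n : ℕ} {K : Type*} [Field K] [IsAlgClosed K]
    (r : ℕ) (f h k : Fin r → MvPolynomial (Fin n × Fin n) K) (l : Fin r → ℕ)
    (I : Ideal (MvPolynomial (Fin n × Fin n) K)) (hI : I = Ideal.span (Set.range f))
    (hfh : ∀ i : Fin r, ∀ v : Matrix (Fin n) (Fin n) K, IsUnit v →
      v.det ^ l i * matEval v⁻¹ (f i) = matEval v (h i))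
    (hk : ∀ i : Fin r, k i = detPoly n K * h i) :
    (∀ v ∈ Vstar I, v⁻¹ ∈ Vstar I) ↔ (∀ i : Fin r, k i ∈ I.radical) := by
  have hk_zero (i : Fin r) (v : Matrix (Fin n) (Fin n) K) :
      matEval v (k i) = 0 ↔ (IsUnit v → matEval v⁻¹ (f i) = 0) :=
    hk i ▸ matEval_detPoly_mul_eq_zero_iff (hfh i) v
  simp only [mem_radical_iff_forall_mem_Vset, hk_zero]
  subst hI
  constructor
  · intro hcl i v hv hu
    exact (mem_Vset_span_range_iff f _).mp (hcl v ⟨hv, hu⟩).1 i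
  · rintro hrad v ⟨hv, hu⟩
    exact ⟨(mem_Vset_span_range_iff f _).mpr fun i => hrad i v hv hu,
      Matrix.isUnit_nonsing_inv_iff.mpr hu⟩

/-- `V*(I)` is closed under inversion iff `kᵢ ∈ √I` for every `i`,
where `kᵢ = det(x)·hᵢ` and `det(v)^{lᵢ} · fᵢ(v⁻¹) = hᵢ(v)` for all invertible `v`. -/
theorem stmt8 {n : ℕ} (hn : 1 ≤ n) {K : Type*} [Field K] [IsAlgClosed K]
    (r : ℕ) (f h k : Fin r → MvPolynomial (Fin n × Fin n) K) (l : Fin r → ℕ)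
    (I : Ideal (MvPolynomial (Fin n × Fin n) K)) (hI : I = Ideal.span (Set.range f))
    (hfh : ∀ i : Fin r, ∀ v : Matrix (Fin n) (Fin n) K, IsUnit v →
      v.det ^ l i * matEval v⁻¹ (f i) = matEval v (h i))
    (hk : ∀ i : Fin r, k i = detPoly n K * h i) :
    (∀ v ∈ Vstar I, v⁻¹ ∈ Vstar I) ↔ (∀ i : Fin r, k i ∈ I.radical) :=
  stmt8_general r f h k l I hI hfh hk
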